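/- The contour integral (1/(2πi)) ∫_{Γ(1)} z^{-3/2} e^z dz equals 2/√π, where Γ(1) is the contour {1 - s + is : s ≥ 0} ∪ {1 - s - is : s ≥ 0} traversed with increasing imaginary part and z^{-3/2} uses the principal branch. -/

import Mathlib

/-!
`F(z) = 4 E(√z) - 2 z^{-1/2} e^z`, where `E` is the entire primitive of `e^{w²}` vanishing
at `0`, is a primitive of `z^{-3/2} e^z` on the slit plane, so each ray integral is a
difference of values of `F`. Along a ray going to the left, `z^{-1/2} e^z → 0`, while `√z`
escapes to `±i∞` with `Re (√z)² - Im (√z)² = Re z → -∞`; hence `E(√z)` approaches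
`E(±i∞) = ±i√π/2`, the Gaussian integral. The contour integral is therefore
`(F(+i∞) - F(-i∞)) / (2πi) = 4i√π / (2πi) = 2/√π`.
-/

open MeasureTheory Complex Filter Topology Set

-- `E` above: `∫₀^w e^{u²} du` along the legs of the rectangle spanned by `0` and `w`.
noncomputable def gaussPrimitive (w : ℂ) : ℂ :=
  wedgeIntegral 0 w fun u => cexp (u ^ 2)

lemma hasDerivAt_gaussPrimitive (w : ℂ) : HasDerivAt gaussPrimitive (cexp (w ^ 2)) w := by
  have hf : Differentiable ℂ fun u : ℂ => cexp (u ^ 2) := by fun_prop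
  exact (hf.differentiableOn (s := Metric.ball 0 (‖w‖ + 1))).isConservativeOn
    |>.hasDerivAt_wedgeIntegral hf.continuous.continuousOn (by simp)

lemma gaussPrimitive_ofReal_mul_I (y : ℝ) :
    gaussPrimitive (y * I) = (∫ t in (0 : ℝ)..y, Real.exp (-t ^ 2) : ℝ) * I := by
  simp only [gaussPrimitive, wedgeIntegral, ← intervalIntegral.integral_ofReal]
  simp [mul_pow, mul_comm]

lemma tendsto_integral_exp_neg_sq_atTop :
    Tendsto (fun y : ℝ => ∫ t in (0 : ℝ)..y, Real.exp (-t ^ 2)) atTop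
      (𝓝 (Real.sqrt Real.pi / 2)) := by
  have h : ∫ t in Ioi (0 : ℝ), Real.exp (-t ^ 2) = Real.sqrt Real.pi / 2 := by
    simpa using integral_gaussian_Ioi 1
  rw [← h]
  exact intervalIntegral_tendsto_integral_Ioi 0
    (by simpa using (integrable_exp_neg_mul_sq one_pos).integrableOn) tendsto_id

lemma tendsto_integral_exp_neg_sq_atBot :
    Tendsto (fun y : ℝ => ∫ t in (0 : ℝ)..y, Real.exp (-t ^ 2)) atBot
      (𝓝 (-(Real.sqrt Real.pi / 2))) := by
  refine (tendsto_integral_exp_neg_sq_atTop.comp tendsto_neg_atBot_atTop).neg.congr fun y => ?_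
  have h := intervalIntegral.integral_comp_neg (a := 0) (b := y) fun t => Real.exp (-t ^ 2)
  simp only [even_two.neg_pow, neg_zero] at h
  simp [h, intervalIntegral.integral_symm 0 (-y)]

lemma norm_gaussPrimitive_sub_le {p : ℂ} (hp : 0 ≤ p.re) :
    ‖gaussPrimitive p - gaussPrimitive (p.im * I)‖ ≤ p.re * Real.exp (p ^ 2).re := by
  have hderiv : ∀ x ∈ uIcc 0 p.re, HasDerivAt (fun x : ℝ => gaussPrimitive (x + p.im * I))
      (cexp ((x + p.im * I) ^ 2)) x := fun x _ =>
    ((hasDerivAt_gaussPrimitive _).comp_add_const _ _).comp_ofReal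
  have hbound : ∀ x ∈ uIoc 0 p.re, ‖cexp ((x + p.im * I) ^ 2)‖ ≤ Real.exp (p ^ 2).re := by
    intro x hx
    rw [uIoc_of_le hp] at hx
    have hsq : (p ^ 2).re = p.re ^ 2 - p.im ^ 2 := by simp [sq]
    rw [norm_exp, Real.exp_le_exp, hsq]
    simp only [sq, mul_re, add_re, add_im, ofReal_re, ofReal_im, mul_im, I_re, I_im]
    nlinarith [hx.1, hx.2]
  have h := intervalIntegral.norm_integral_le_of_norm_le_const hbound
  rw [intervalIntegral.integral_eq_sub_of_hasDerivAt hderiv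
    (by apply Continuous.intervalIntegrable; fun_prop), re_add_im] at h
  simpa [abs_of_nonneg hp, mul_comm] using h

lemma Complex.re_sqrt_nonneg (z : ℂ) : 0 ≤ (sqrt z).re := by
  rw [sqrt, cpow_inv_two_re]
  positivity

lemma Complex.re_sqrt_le (z : ℂ) : (sqrt z).re ≤ √‖z‖ := by
  rw [sqrt, cpow_inv_two_re]
  exact Real.sqrt_le_sqrt (by linarith [re_le_norm z])

lemma Complex.sqrt_sq (z : ℂ) : sqrt z ^ 2 = z :=
  cpow_ofNat_inv_pow z 2

section Sqrt

variable {α : Type*} {l : Filter α} {z : α → ℂ}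

lemma tendsto_im_sqrt_atTop (hre : Tendsto (fun x => (z x).re) l atBot)
    (him : ∀ᶠ x in l, 0 ≤ (z x).im) : Tendsto (fun x => (sqrt (z x)).im) l atTop := by
  have hlow : Tendsto (fun x => √(-(z x).re)) l atTop :=
    Real.tendsto_sqrt_atTop.comp (tendsto_neg_atBot_atTop.comp hre)
  refine tendsto_atTop_mono' l ?_ hlow
  filter_upwards [him] with x hx
  rw [sqrt, cpow_inv_two_im_eq_sqrt hx]
  exact Real.sqrt_le_sqrt (by linarith [neg_abs_le (z x).re, abs_re_le_norm (z x)])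

lemma tendsto_im_sqrt_atBot (hre : Tendsto (fun x => (z x).re) l atBot)
    (him : ∀ᶠ x in l, (z x).im < 0) : Tendsto (fun x => (sqrt (z x)).im) l atBot := by
  have hup : Tendsto (fun x => -√(-(z x).re)) l atBot :=
    tendsto_neg_atTop_atBot.comp (Real.tendsto_sqrt_atTop.comp (tendsto_neg_atBot_atTop.comp hre))
  refine tendsto_atBot_mono' l ?_ hup
  filter_upwards [him] with x hx
  rw [sqrt, cpow_inv_two_im_eq_neg_sqrt hx]
  exact neg_le_neg (Real.sqrt_le_sqrt (by linarith [neg_abs_le (z x).re, abs_re_le_norm (z x)]))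

lemma tendsto_gaussPrimitive_sqrt {L : Filter ℝ} {c : ℝ}
    (hdecay : Tendsto (fun x => √‖z x‖ * Real.exp (z x).re) l (𝓝 0))
    (him : Tendsto (fun x => (sqrt (z x)).im) l L)
    (hc : Tendsto (fun y => ∫ t in (0 : ℝ)..y, Real.exp (-t ^ 2)) L (𝓝 c)) :
    Tendsto (fun x => gaussPrimitive (sqrt (z x))) l (𝓝 (c * I)) := by
  have himag : Tendsto (fun x => gaussPrimitive ((sqrt (z x)).im * I)) l (𝓝 (c * I)) := by
    simp only [gaussPrimitive_ofReal_mul_I]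
    exact ((continuous_ofReal.tendsto c).comp (hc.comp him)).mul_const I
  have hdiff : Tendsto
      (fun x => gaussPrimitive (sqrt (z x)) - gaussPrimitive ((sqrt (z x)).im * I)) l (𝓝 0) := by
    refine squeeze_zero_norm (fun x => ?_) hdecay
    refine (norm_gaussPrimitive_sub_le (re_sqrt_nonneg _)).trans ?_
    rw [sqrt_sq]
    exact mul_le_mul_of_nonneg_right (re_sqrt_le _) (Real.exp_nonneg _)
  simpa using hdiff.add himag

end Sqrt

-- `F` above: the derivative `2 z^{-1/2} e^z` of `4 E(√z)` cancels the second term of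
-- `d/dz [-2 z^{-1/2} e^z] = z^{-3/2} e^z - 2 z^{-1/2} e^z`.
noncomputable def hankelPrimitive (z : ℂ) : ℂ :=
  4 * gaussPrimitive (sqrt z) - 2 * (z ^ (-(1 / 2) : ℂ) * cexp z)

lemma hasDerivAt_hankelPrimitive {z : ℂ} (hz : z ∈ slitPlane) :
    HasDerivAt hankelPrimitive (z ^ (-(3 / 2) : ℂ) * cexp z) z := by
  have hgauss := (hasDerivAt_gaussPrimitive (sqrt z)).comp z (hasDerivAt_sqrt hz)
  have hpow := (hasStrictDerivAt_cpow_const (c := -(1 / 2)) hz).hasDerivAt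
  refine ((hgauss.const_mul 4).sub ((hpow.mul (hasDerivAt_exp z)).const_mul 2)).congr_deriv ?_
  rw [sqrt_sq, show (-(1 / 2) : ℂ) - 1 = -(3 / 2) by norm_num,
    show (-1 / 2 : ℂ) = -(1 / 2) by norm_num]
  ring

section Ray

open ComplexConjugate

variable {v : ℂ}

lemma one_add_mul_mem_slitPlane (hv : v.im ≠ 0) {s : ℝ} (hs : 0 ≤ s) :
    1 + s * v ∈ slitPlane := by
  rw [mem_slitPlane_iff]
  rcases hs.eq_or_lt with rfl | hs
  · simp
  · right
    simpa using ⟨hs.ne', hv⟩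

-- `|v.im| / ‖v‖` is the distance from `0` to the line `1 + ℝ v`.
lemma abs_im_div_norm_le_norm_one_add_mul (s : ℝ) : |v.im| / ‖v‖ ≤ ‖1 + s * v‖ := by
  rcases eq_or_ne v 0 with rfl | hv
  · simp
  rw [div_le_iff₀ (norm_pos_iff.mpr hv), ← norm_conj v, ← norm_mul]
  have him : ((1 + s * v) * conj v).im = -v.im := by
    simp only [mul_im, add_re, add_im, one_re, one_im, conj_re, conj_im, mul_re,
      ofReal_re, ofReal_im]
    ring
  simpa [him] using abs_im_le_norm ((1 + s * v) * conj v)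

lemma re_one_add_mul (s : ℝ) : (1 + s * v).re = 1 + s * v.re := by simp

lemma norm_cpow_mul_exp_one_add_mul_le (hv : v.im ≠ 0) {a : ℝ} (ha : a ≤ 0) (s : ℝ) :
    ‖(1 + s * v) ^ (a : ℂ) * cexp (1 + s * v)‖ ≤
      (|v.im| / ‖v‖) ^ a * Real.exp (1 + s * v.re) := by
  have hpos : 0 < |v.im| / ‖v‖ :=
    div_pos (abs_pos.mpr hv) (norm_pos_iff.mpr fun h => hv (by simp [h]))
  rw [norm_mul, norm_cpow_real, norm_exp, re_one_add_mul]
  exact mul_le_mul_of_nonneg_right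
    (Real.rpow_le_rpow_of_nonpos hpos (abs_im_div_norm_le_norm_one_add_mul s) ha)
    (Real.exp_nonneg _)

lemma tendsto_re_one_add_mul_atBot (hv : v.re < 0) :
    Tendsto (fun s : ℝ => (1 + s * v).re) atTop atBot := by
  have hlin : Tendsto (fun s : ℝ => s * v.re) atTop atBot := tendsto_id.atTop_mul_const_of_neg hv
  simpa only [re_one_add_mul] using tendsto_atBot_add_const_left _ 1 hlin

lemma tendsto_exp_re_one_add_mul (hv : v.re < 0) :
    Tendsto (fun s : ℝ => Real.exp (1 + s * v.re)) atTop (𝓝 0) := by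
  simpa only [re_one_add_mul, Function.comp_def] using
    Real.tendsto_exp_atBot.comp (tendsto_re_one_add_mul_atBot hv)

lemma tendsto_sqrt_norm_mul_exp_re_one_add_mul (hv : v.re < 0) :
    Tendsto (fun s : ℝ => √‖1 + s * v‖ * Real.exp (1 + s * v).re) atTop (𝓝 0) := by
  have hlim := (tendsto_rpow_mul_exp_neg_mul_atTop_nhds_zero (1 / 2) (-v.re)
    (by linarith)).const_mul (√(1 + ‖v‖) * Real.exp 1)
  rw [mul_zero] at hlim
  refine squeeze_zero' (Eventually.of_forall fun s => by positivity) ?_ hlim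
  filter_upwards [eventually_ge_atTop 1] with s hs
  have hnorm : ‖1 + s * v‖ ≤ (1 + ‖v‖) * s := by
    calc ‖1 + s * v‖ ≤ 1 + s * ‖v‖ := by
          simpa [abs_of_nonneg (zero_le_one.trans hs)] using norm_add_le (1 : ℂ) (s * v)
      _ ≤ (1 + ‖v‖) * s := by nlinarith
  calc √‖1 + s * v‖ * Real.exp (1 + s * v).re
      ≤ √((1 + ‖v‖) * s) * Real.exp (1 + s * v.re) := by
        rw [re_one_add_mul]
        gcongr
    _ = √(1 + ‖v‖) * Real.exp 1 * (s ^ (1 / 2 : ℝ) * Real.exp (-(-v.re) * s)) := by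
        rw [Real.sqrt_mul (by positivity), Real.sqrt_eq_rpow s, Real.exp_add]
        ring_nf

lemma tendsto_hankelPrimitive_one_add_mul {L : Filter ℝ} {c : ℝ} (hre : v.re < 0)
    (him : v.im ≠ 0)
    (hsqrt : Tendsto (fun s : ℝ => (sqrt (1 + s * v)).im) atTop L)
    (hc : Tendsto (fun y => ∫ t in (0 : ℝ)..y, Real.exp (-t ^ 2)) L (𝓝 c)) :
    Tendsto (fun s : ℝ => hankelPrimitive (1 + s * v)) atTop (𝓝 (4 * (c * I))) := by
  have hgauss :=
    tendsto_gaussPrimitive_sqrt (tendsto_sqrt_norm_mul_exp_re_one_add_mul hre) hsqrt hc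
  have hdecay : Tendsto (fun s : ℝ => (1 + s * v) ^ (-(1 / 2) : ℂ) * cexp (1 + s * v)) atTop
      (𝓝 0) := by
    have hbound :=
      (tendsto_exp_re_one_add_mul hre).const_mul ((|v.im| / ‖v‖) ^ (-(1 / 2) : ℝ))
    rw [mul_zero] at hbound
    refine squeeze_zero_norm (fun s => ?_) hbound
    simpa using norm_cpow_mul_exp_one_add_mul_le him (a := -(1 / 2)) (by norm_num) s
  simpa [hankelPrimitive] using (hgauss.const_mul 4).sub (hdecay.const_mul 2)

lemma integrableOn_cpow_mul_exp_one_add_mul (hre : v.re < 0) (him : v.im ≠ 0) :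
    IntegrableOn (fun s : ℝ => (1 + s * v) ^ (-(3 / 2) : ℂ) * cexp (1 + s * v) * v)
      (Ioi 0) := by
  refine Integrable.mono' ((exp_neg_integrableOn_Ioi 0 (b := -v.re) (by linarith)).const_mul
    ((|v.im| / ‖v‖) ^ (-(3 / 2) : ℝ) * Real.exp 1 * ‖v‖)) ?_ ?_
  · refine ContinuousOn.aestronglyMeasurable (fun s hs => ?_) measurableSet_Ioi
    have hslit := one_add_mul_mem_slitPlane him (le_of_lt hs)
    have hray : ContinuousAt (fun s : ℝ => 1 + s * v) s := by fun_prop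
    have hpow : ContinuousAt (fun s : ℝ => (1 + s * v) ^ (-(3 / 2) : ℂ)) s :=
      (continuousAt_cpow_const hslit).comp (f := fun s : ℝ => 1 + s * v) hray
    exact (hpow.mul hray.cexp).mul continuousAt_const |>.continuousWithinAt
  · refine (ae_restrict_iff' measurableSet_Ioi).mpr (Eventually.of_forall fun s _ => ?_)
    have h := norm_cpow_mul_exp_one_add_mul_le him (a := -(3 / 2)) (by norm_num) s
    push_cast at h
    rw [norm_mul]
    calc ‖(1 + s * v) ^ (-(3 / 2) : ℂ) * cexp (1 + s * v)‖ * ‖v‖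
        ≤ (|v.im| / ‖v‖) ^ (-(3 / 2) : ℝ) * Real.exp (1 + s * v.re) * ‖v‖ := by gcongr
      _ = _ := by rw [Real.exp_add]; ring_nf

lemma integral_cpow_mul_exp_one_add_mul {L : ℂ} (hre : v.re < 0) (him : v.im ≠ 0)
    (hL : Tendsto (fun s : ℝ => hankelPrimitive (1 + s * v)) atTop (𝓝 L)) :
    ∫ s in Ioi (0 : ℝ), (1 + s * v) ^ (-(3 / 2) : ℂ) * cexp (1 + s * v) * v =
      L - hankelPrimitive 1 := by
  have hderiv : ∀ s ∈ Ici (0 : ℝ), HasDerivAt (fun s : ℝ => hankelPrimitive (1 + s * v))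
      ((1 + s * v) ^ (-(3 / 2) : ℂ) * cexp (1 + s * v) * v) s := fun s hs => by
    have hray : HasDerivAt (fun u : ℂ => 1 + u * v) v s := by
      simpa using ((hasDerivAt_id (s : ℂ)).mul_const v).const_add 1
    exact (HasDerivAt.comp (h := fun u : ℂ => 1 + u * v) _
      (hasDerivAt_hankelPrimitive (one_add_mul_mem_slitPlane him hs)) hray).comp_ofReal
  simpa using integral_Ioi_of_hasDerivAt_of_tendsto' hderiv
    (integrableOn_cpow_mul_exp_one_add_mul hre him) hL

lemma integral_cpow_mul_exp_one_add_mul_of_im_pos (hre : v.re < 0) (him : 0 < v.im) :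
    ∫ s in Ioi (0 : ℝ), (1 + s * v) ^ (-(3 / 2) : ℂ) * cexp (1 + s * v) * v =
      2 * Real.sqrt Real.pi * I - hankelPrimitive 1 := by
  have hsqrt := tendsto_im_sqrt_atTop (tendsto_re_one_add_mul_atBot hre)
    (eventually_ge_atTop 0 |>.mono fun s hs => by simpa using mul_nonneg hs him.le)
  rw [integral_cpow_mul_exp_one_add_mul hre him.ne'
    (tendsto_hankelPrimitive_one_add_mul hre him.ne' hsqrt tendsto_integral_exp_neg_sq_atTop)]
  push_cast
  ring

lemma integral_cpow_mul_exp_one_add_mul_of_im_neg (hre : v.re < 0) (him : v.im < 0) :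
    ∫ s in Ioi (0 : ℝ), (1 + s * v) ^ (-(3 / 2) : ℂ) * cexp (1 + s * v) * v =
      -(2 * Real.sqrt Real.pi * I) - hankelPrimitive 1 := by
  have hsqrt := tendsto_im_sqrt_atBot (tendsto_re_one_add_mul_atBot hre)
    (eventually_gt_atTop 0 |>.mono fun s hs => by simpa using mul_neg_of_pos_of_neg hs him)
  rw [integral_cpow_mul_exp_one_add_mul hre him.ne
    (tendsto_hankelPrimitive_one_add_mul hre him.ne hsqrt tendsto_integral_exp_neg_sq_atBot)]
  push_cast
  ring

end Ray

/-- Hankel-type contour integral: `(1/(2πi)) ∫_{Γ(1)} z^{-3/2} e^z dz = 2/√π`,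
where `Γ(1) = {1-s+is : s ≥ 0} ∪ {1-s-is : s ≥ 0}` is traversed with increasing
imaginary part (parametrized below: on the lower ray `z = 1-s-is`, `dz = (1+i)ds`
as `s` decreases from `∞` to `0`, and on the upper ray `z = 1-s+is`,
`dz = (-1+i)ds` as `s` increases from `0` to `∞`), and `z^{-3/2}` is the
principal branch.  This equals `1/Γ(3/2) = 2/√π`. -/
theorem hankel_contour_integral :
    (1 / (2 * Real.pi * Complex.I)) *
        ((∫ s in Set.Ioi (0 : ℝ),
            ((1 : ℂ) - s - s * Complex.I) ^ (-(3/2) : ℂ) *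
              Complex.exp ((1 : ℂ) - s - s * Complex.I) * (1 + Complex.I)) +
          ∫ s in Set.Ioi (0 : ℝ),
            ((1 : ℂ) - s + s * Complex.I) ^ (-(3/2) : ℂ) *
              Complex.exp ((1 : ℂ) - s + s * Complex.I) * (-1 + Complex.I)) =
      ((2 / Real.sqrt Real.pi : ℝ) : ℂ) := by
  have hlower : ∫ s in Ioi (0 : ℝ), ((1 : ℂ) - s - s * I) ^ (-(3/2) : ℂ) *
      cexp ((1 : ℂ) - s - s * I) * (1 + I) =
      -∫ s in Ioi (0 : ℝ),
        (1 + s * (-1 - I)) ^ (-(3 / 2) : ℂ) * cexp (1 + s * (-1 - I)) * (-1 - I) := by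
    rw [← integral_neg]
    congr 1 with s
    rw [show (1 : ℂ) - s - s * I = 1 + s * (-1 - I) by ring]
    ring
  have hupper : ∫ s in Ioi (0 : ℝ), ((1 : ℂ) - s + s * I) ^ (-(3/2) : ℂ) *
      cexp ((1 : ℂ) - s + s * I) * (-1 + I) =
      ∫ s in Ioi (0 : ℝ),
        (1 + s * (-1 + I)) ^ (-(3 / 2) : ℂ) * cexp (1 + s * (-1 + I)) * (-1 + I) := by
    congr 1 with s
    rw [show (1 : ℂ) - s + s * I = 1 + s * (-1 + I) by ring]
  rw [hlower, hupper, integral_cpow_mul_exp_one_add_mul_of_im_neg (by simp) (by simp),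
    integral_cpow_mul_exp_one_add_mul_of_im_pos (by simp) (by simp)]
  have hpi : (Real.sqrt Real.pi : ℂ) ^ 2 = Real.pi := by
    rw [← ofReal_pow, Real.sq_sqrt Real.pi_pos.le]
  have hsqrt : (Real.sqrt Real.pi : ℂ) ≠ 0 :=
    ofReal_ne_zero.mpr (Real.sqrt_pos.mpr Real.pi_pos).ne'
  push_cast
  rw [← hpi]
  field_simp
  ring
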